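/- (Process equivalence, Lemma 1.) Let c : ℂ → Fin k be a periodic k-coloring with fundamental parallelogram P_c, and let m ≥ 1, z_1, …, z_m ∈ ℂ and θ_1, …, θ_m ∈ ℝ be given (the j-th edge of a unit-distance graph embedded in the plane having endpoints z_j and z_j + e^{iθ_j}). Then for any two colors c₁, c₂ ∈ Fin k: (1/m) Σ_{j=1}^m (1/(2π·Area(P_c))) ∫_{P_c} ∫_0^{2π} 1[c(e^{iθ}·z_j + a) = c₁ and c(e^{iθ}·(z_j + e^{iθ_j}) + a) = c₂] dθ da = (1/(2π·Area(P_c))) ∫_{P_c} ∫_0^{2π} 1[c(a) = c₁ and c(a + e^{iθ}) = c₂] dθ da. In particular the left-hand side does not depend on the chosen points z_j and angles θ_j. -/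

import Mathlib

/-!
For a fixed angle `θ`, the rotated edge `e^{iθ} • (z, z + e^{iφ}) + a` is the needle based at
`a + e^{iθ} z` pointing in direction `θ + φ`. As the coloring is periodic, the integral over the
fundamental parallelogram is invariant under the translation `a ↦ a + e^{iθ} z`, and the
resulting needle integral is `2π`-periodic in the direction, so the shift `θ ↦ θ + φ` does not
change its integral over a full turn. After exchanging the two integrals (Fubini), every edge
therefore contributes exactly the needle integral, and so does their average.
-/

open MeasureTheory Real

noncomputable section

/-- The fundamental parallelogram `{t•u + s•v : 0 ≤ t, s < 1}` in `ℂ`. -/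
def paraC (u v : ℂ) : Set ℂ :=
  {x | ∃ t s : ℝ, 0 ≤ t ∧ t < 1 ∧ 0 ≤ s ∧ s < 1 ∧ x = t • u + s • v}

theorem Function.Periodic.of_mem_span_int {M β : Type*} [AddCommGroup M] {g : M → β} {s : Set M}
    (hs : ∀ p ∈ s, Function.Periodic g p) {p : M} (hp : p ∈ Submodule.span ℤ s) :
    Function.Periodic g p := by
  rw [← Submodule.mem_toAddSubgroup, Submodule.span_int_eq_addSubgroupClosure] at hp
  induction hp using AddSubgroup.closure_induction with
  | mem p hp => exact hs p hp
  | zero => exact Function.periodic_with_period_zero g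
  | add p q _ _ hp hq => exact hp.add_period hq
  | neg p _ hp => exact hp.neg

theorem MeasureTheory.IsAddFundamentalDomain.setIntegral_comp_add_right {α E : Type*}
    [AddCommGroup α] [MeasurableSpace α] [MeasurableAdd α] {μ : Measure α} [μ.IsAddLeftInvariant]
    [NormedAddCommGroup E] [NormedSpace ℝ E] {L : AddSubgroup α} [Countable L] {s : Set α}
    (hs : IsAddFundamentalDomain L s μ) {g : α → E} (hg : ∀ l ∈ L, Function.Periodic g l)
    (w : α) : ∫ x in s, g (x + w) ∂μ = ∫ x in s, g x ∂μ := by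
  have hshift := measurePreserving_add_right μ w
  have hs' : IsAddFundamentalDomain L ((· + w) ⁻¹' s) μ :=
    hs.preimage_of_equiv hshift.quasiMeasurePreserving Function.bijective_id
      fun l x => add_assoc (l : α) x w
  calc ∫ x in s, g (x + w) ∂μ = ∫ x in (· + w) ⁻¹' s, g (x + w) ∂μ :=
        hs.setIntegral_eq hs' fun l x => by
          rw [AddSubgroup.vadd_def, vadd_eq_add, add_assoc, add_comm, hg l l.2]
    _ = ∫ x in s, g x ∂μ :=
        hshift.setIntegral_preimage_emb (MeasurableEquiv.addRight w).measurableEmbedding g s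

section Parallelogram

variable {u v : ℂ}

def parallelogramBasis (huv : LinearIndependent ℝ ![u, v]) : Module.Basis (Fin 2) ℝ ℂ :=
  basisOfLinearIndependentOfCardEqFinrank huv (by simp)

theorem coe_parallelogramBasis (huv : LinearIndependent ℝ ![u, v]) :
    ⇑(parallelogramBasis huv) = ![u, v] :=
  coe_basisOfLinearIndependentOfCardEqFinrank _ _

theorem paraC_eq_fundamentalDomain (huv : LinearIndependent ℝ ![u, v]) :
    paraC u v = ZSpan.fundamentalDomain (parallelogramBasis huv) := by
  set b := parallelogramBasis huv
  have hsum : ∀ t s : ℝ, t • u + s • v = ∑ i, ![t, s] i • b i := fun t s => by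
    simp [b, coe_parallelogramBasis, Fin.sum_univ_two]
  ext x
  simp only [ZSpan.mem_fundamentalDomain, Fin.forall_fin_two, Set.mem_Ico]
  constructor
  · rintro ⟨t, s, ht₀, ht₁, hs₀, hs₁, rfl⟩
    rw [hsum, b.repr_sum_self]
    simp [ht₀, ht₁, hs₀, hs₁]
  · rintro ⟨⟨ht₀, ht₁⟩, hs₀, hs₁⟩
    refine ⟨_, _, ht₀, ht₁, hs₀, hs₁, ?_⟩
    rw [hsum]
    simpa using (b.sum_repr x).symm

theorem volume_paraC_lt_top (huv : LinearIndependent ℝ ![u, v]) : volume (paraC u v) < ⊤ := by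
  rw [paraC_eq_fundamentalDomain huv]
  exact (ZSpan.fundamentalDomain_isBounded _).measure_lt_top

theorem setIntegral_paraC_comp_add_right {E : Type*} [NormedAddCommGroup E] [NormedSpace ℝ E]
    (huv : LinearIndependent ℝ ![u, v]) {g : ℂ → E} (hgu : Function.Periodic g u)
    (hgv : Function.Periodic g v) (w : ℂ) :
    ∫ a in paraC u v, g (a + w) = ∫ a in paraC u v, g a := by
  have hL : ∀ p ∈ Set.range (parallelogramBasis huv), Function.Periodic g p := by
    simp only [Set.forall_mem_range, Fin.forall_fin_two, coe_parallelogramBasis]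
    exact ⟨hgu, hgv⟩
  have : Countable (Submodule.span ℤ (Set.range (parallelogramBasis huv))).toAddSubgroup :=
    inferInstanceAs (Countable (Submodule.span ℤ _))
  rw [paraC_eq_fundamentalDomain huv]
  exact (ZSpan.isAddFundamentalDomain' _ volume).setIntegral_comp_add_right
    (fun p hp => .of_mem_span_int hL hp) w

end Parallelogram

section Coloring

variable {X κ : Type*} [DecidableEq κ]

def pairIndicator (c : X → κ) (c₁ c₂ : κ) (x y : X) : ℝ :=
  if c x = c₁ ∧ c y = c₂ then 1 else 0

theorem measurable_pairIndicator [MeasurableSpace X] [MeasurableSpace κ]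
    [MeasurableSingletonClass κ] {c : X → κ} (hc : Measurable c) (c₁ c₂ : κ) :
    Measurable fun p : X × X => pairIndicator c c₁ c₂ p.1 p.2 :=
  Measurable.ite (((hc.comp measurable_fst) (measurableSet_singleton c₁)).inter
    ((hc.comp measurable_snd) (measurableSet_singleton c₂))) measurable_const measurable_const

theorem integrable_pairIndicator_comp {Ω : Type*} [MeasurableSpace X] [MeasurableSpace κ]
    [MeasurableSingletonClass κ] [MeasurableSpace Ω] {μ : Measure Ω} [IsFiniteMeasure μ]
    {c : X → κ} (hc : Measurable c) (c₁ c₂ : κ) {A B : Ω → X} (hA : Measurable A)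
    (hB : Measurable B) : Integrable (fun ω => pairIndicator c c₁ c₂ (A ω) (B ω)) μ :=
  .of_bound ((measurable_pairIndicator hc c₁ c₂).comp (hA.prodMk hB)).aestronglyMeasurable 1
    (.of_forall fun ω => by unfold pairIndicator; split_ifs <;> simp)

theorem Function.Periodic.pairIndicator_add {G : Type*} [AddCommGroup G] {c : G → κ} {p : G}
    (hc : Function.Periodic c p) (c₁ c₂ : κ) (w : G) :
    Function.Periodic (fun x => pairIndicator c c₁ c₂ x (x + w)) p := fun x => by
  simp only [pairIndicator, add_right_comm x p w, hc x, hc (x + w)]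

end Coloring

section Needle

open Complex

variable {κ : Type*} [DecidableEq κ] {c : ℂ → κ} {u v : ℂ}

theorem setIntegral_paraC_rotated_edge_eq (huv : LinearIndependent ℝ ![u, v])
    (hcu : Function.Periodic c u) (hcv : Function.Periodic c v) (z : ℂ) (φ θ : ℝ) (c₁ c₂ : κ) :
    ∫ a in paraC u v, pairIndicator c c₁ c₂ (exp (θ * I) * z + a)
        (exp (θ * I) * (z + exp (φ * I)) + a)
      = ∫ a in paraC u v, pairIndicator c c₁ c₂ a (a + exp (↑(θ + φ) * I)) := by
  have hendpoint : ∀ a, exp (θ * I) * (z + exp (φ * I)) + a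
      = a + exp (θ * I) * z + exp (↑(θ + φ) * I) := fun a => by
    push_cast
    rw [add_mul, Complex.exp_add]
    ring
  simp only [hendpoint, add_comm (exp (θ * I) * z)]
  exact setIntegral_paraC_comp_add_right huv (hcu.pairIndicator_add c₁ c₂ _)
    (hcv.pairIndicator_add c₁ c₂ _) _

theorem periodic_setIntegral_paraC_needle (c₁ c₂ : κ) :
    Function.Periodic
      (fun ψ : ℝ => ∫ a in paraC u v, pairIndicator c c₁ c₂ a (a + exp (ψ * I))) (2 * π) :=
  fun ψ => by
    have := exp_mul_I_periodic (ψ : ℂ)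
    push_cast at this ⊢
    rw [this]

theorem integral_paraC_edge_eq_integral_needle [MeasurableSpace κ]
    [MeasurableSingletonClass κ] (hc : Measurable c) (huv : LinearIndependent ℝ ![u, v])
    (hcu : Function.Periodic c u) (hcv : Function.Periodic c v) (z : ℂ) (φ : ℝ) (c₁ c₂ : κ) :
    ∫ a in paraC u v, ∫ θ in (0 : ℝ)..(2 * π), pairIndicator c c₁ c₂ (exp (θ * I) * z + a)
        (exp (θ * I) * (z + exp (φ * I)) + a)
      = ∫ a in paraC u v, ∫ θ in (0 : ℝ)..(2 * π), pairIndicator c c₁ c₂ a (a + exp (θ * I)) := by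
  have : IsFiniteMeasure (volume.restrict (paraC u v)) :=
    isFiniteMeasure_restrict.mpr (volume_paraC_lt_top huv).ne
  have : IsFiniteMeasure (volume.restrict (Set.uIoc 0 (2 * π))) :=
    isFiniteMeasure_restrict.mpr measure_Ioc_lt_top.ne
  have hH := periodic_setIntegral_paraC_needle (u := u) (v := v) (c := c) c₁ c₂
  rw [← intervalIntegral_integral_swap, ← intervalIntegral_integral_swap]
  · calc _ = ∫ θ in (0 : ℝ)..(2 * π),
          ∫ a in paraC u v, pairIndicator c c₁ c₂ a (a + exp (↑(θ + φ) * I)) :=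
          intervalIntegral.integral_congr fun θ _ =>
            setIntegral_paraC_rotated_edge_eq huv hcu hcv z φ θ c₁ c₂
      _ = ∫ ψ in φ..φ + 2 * π, ∫ a in paraC u v, pairIndicator c c₁ c₂ a (a + exp (ψ * I)) := by
          rw [intervalIntegral.integral_comp_add_right (fun ψ : ℝ =>
            ∫ a in paraC u v, pairIndicator c c₁ c₂ a (a + exp (ψ * I))), zero_add, add_comm]
      _ = _ := by simpa using hH.intervalIntegral_add_eq φ 0
  all_goals exact integrable_pairIndicator_comp hc c₁ c₂ (by fun_prop) (by fun_prop)

end Needle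

theorem stmt7 (k : ℕ) (c : ℂ → Fin k) (hc : Measurable c) (u v : ℂ)
    (huv : LinearIndependent ℝ ![u, v])
    (hper : ∀ x : ℂ, c (x + u) = c x ∧ c (x + v) = c x)
    (m : ℕ) (hm : 1 ≤ m) (z : Fin m → ℂ) (φ : Fin m → ℝ) (c₁ c₂ : Fin k) :
    (1 / (m : ℝ)) * ∑ j : Fin m, (1 / (2 * π * (volume (paraC u v)).toReal)) *
        ∫ a in paraC u v, ∫ θ in (0:ℝ)..(2*π),
          (if c (Complex.exp (θ * Complex.I) * z j + a) = c₁ ∧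
              c (Complex.exp (θ * Complex.I) * (z j + Complex.exp (φ j * Complex.I)) + a)
                = c₂ then (1:ℝ) else 0)
      = (1 / (2 * π * (volume (paraC u v)).toReal)) *
        ∫ a in paraC u v, ∫ θ in (0:ℝ)..(2*π),
          (if c a = c₁ ∧ c (a + Complex.exp (θ * Complex.I)) = c₂ then (1:ℝ) else 0) := by
  have hedge := fun j => integral_paraC_edge_eq_integral_needle hc huv
    (fun x => (hper x).1) (fun x => (hper x).2) (z j) (φ j) c₁ c₂
  simp only [pairIndicator] at hedge
  have hm₀ : (m : ℝ) ≠ 0 := Nat.cast_ne_zero.mpr (Nat.one_le_iff_ne_zero.mp hm)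
  simp only [hedge, Finset.sum_const, Finset.card_univ, Fintype.card_fin, nsmul_eq_mul]
  rw [← mul_assoc, one_div_mul_cancel hm₀, one_mul]

end
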